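/- Let h : R^D → R^D be an affine bijection such that for all x, y ∈ R^D, ∑ᵢ |h(x)ᵢ - h(y)ᵢ|^α = ∑ᵢ |xᵢ - yᵢ|^α for some fixed 0 < α < 2, and such that ‖h(x)‖₂ = ‖x‖₂ for all x. Then h is linear and is given by a signed permutation matrix. -/

import Mathlib

/-!
Norm preservation at the origin forces `b = 0`, so `h = M *ᵥ ·`. Each column `c` of `M` is the
image of a standard basis vector, hence `∑ cᵢ² = 1 = ∑ |cᵢ|^α`. Since `|cᵢ| ≤ 1` and `α < 2`,
`cᵢ² ≤ |cᵢ|^α` termwise, so equality holds termwise and forces `cᵢ ∈ {0, ±1}`: every column is a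
signed basis vector. Two columns supported on the same row would make `M (eⱼ + eₖ)` have squared
norm `0` or `4` instead of `2`.
-/

open Real Finset

/-- `M` is a signed permutation matrix. -/
def IsSignedPerm {D : ℕ} (M : Matrix (Fin D) (Fin D) ℝ) : Prop :=
  ∃ σ : Equiv.Perm (Fin D), ∃ s : Fin D → ℝ, (∀ j, s j = 1 ∨ s j = -1) ∧
    ∀ i j, M i j = if i = σ j then s j else 0

open scoped Matrix

lemma sq_le_abs_rpow_of_abs_le_one {α t : ℝ} (hα : α ≤ 2) (ht : |t| ≤ 1) : t ^ 2 ≤ |t| ^ α := by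
  rw [← sq_abs, ← rpow_two]
  exact rpow_le_rpow_of_exponent_ge_of_imp (abs_nonneg t) ht hα (by norm_num)

lemma abs_eq_one_of_abs_rpow_eq_sq {α t : ℝ} (hα : α < 2) (ht : |t| ≤ 1) (ht0 : t ≠ 0)
    (heq : |t| ^ α = t ^ 2) : |t| = 1 := by
  refine ht.eq_of_not_lt fun hlt => ?_
  have := rpow_lt_rpow_of_exponent_gt (abs_pos.2 ht0) hlt hα
  rw [rpow_two, sq_abs, heq] at this
  exact this.false

theorem exists_eq_pi_single_of_sum_sq_eq_one_of_sum_abs_rpow_eq_one {ι : Type*} [Fintype ι]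
    [DecidableEq ι] {α : ℝ} (hα : α < 2) {v : ι → ℝ} (hsq : ∑ i, v i ^ 2 = 1)
    (hrpow : ∑ i, |v i| ^ α = 1) : ∃ i s, (s = 1 ∨ s = -1) ∧ v = Pi.single i s := by
  have hle : ∀ i, |v i| ≤ 1 := fun i => by
    rw [← sq_le_one_iff_abs_le_one, ← hsq]
    exact single_le_sum (fun k _ => sq_nonneg (v k)) (mem_univ i)
  have hterm : ∀ i, |v i| ^ α = v i ^ 2 := fun i =>
    ((sum_eq_sum_iff_of_le fun k _ => sq_le_abs_rpow_of_abs_le_one hα.le (hle k)).1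
      (hsq.trans hrpow.symm) i (mem_univ i)).symm
  obtain ⟨i, hi⟩ : ∃ i, v i ≠ 0 := by
    by_contra! h0
    simp [h0] at hsq
  have hvi : v i ^ 2 = 1 := by
    rw [← sq_abs, abs_eq_one_of_abs_rpow_eq_sq hα (hle i) hi (hterm i), one_pow]
  have hrest : ∀ k ∈ univ.erase i, v k ^ 2 = 0 := by
    rw [← sum_eq_zero_iff_of_nonneg fun k _ => sq_nonneg (v k)]
    linarith [add_sum_erase univ (fun k => v k ^ 2) (mem_univ i)]
  refine ⟨i, v i, sq_eq_one_iff.1 hvi, funext fun k => ?_⟩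
  by_cases hk : k = i
  · subst hk; simp
  · simpa [hk] using hrest k (mem_erase.2 ⟨hk, mem_univ k⟩)

section SignedPerm

variable {D : ℕ} {M : Matrix (Fin D) (Fin D) ℝ} {σ : Fin D → Fin D} {s : Fin D → ℝ}

lemma IsSignedPerm.of_col_eq_single (hσ : Function.Injective σ) (hs : ∀ j, s j = 1 ∨ s j = -1)
    (hM : ∀ j, M.col j = Pi.single (σ j) (s j)) : IsSignedPerm M :=
  ⟨.ofBijective σ hσ.bijective_of_finite, s, hs, fun i j => by
    rw [← M.col_apply, hM j, Pi.single_apply]; rfl⟩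

lemma injective_of_col_eq_single (hs : ∀ j, s j = 1 ∨ s j = -1)
    (hM : ∀ j, M.col j = Pi.single (σ j) (s j))
    (hsq : ∀ x, ∑ i, (M *ᵥ x) i ^ 2 = ∑ i, x i ^ 2) : Function.Injective σ := by
  intro j k hjk
  by_contra hne
  have himage : ∑ i, (M *ᵥ (Pi.single j 1 + Pi.single k 1)) i ^ 2 = (s j + s k) ^ 2 := by
    rw [Matrix.mulVec_add, Matrix.mulVec_single_one, Matrix.mulVec_single_one, hM, hM, hjk,
      ← Pi.single_add]
    simp [Pi.single_apply]
  have hsource : ∑ i, (Pi.single j 1 + Pi.single k 1 : Fin D → ℝ) i ^ 2 = 2 := by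
    rw [Fintype.sum_eq_add j k hne fun x hx => by simp [hx.1, hx.2]]
    norm_num [hne, Ne.symm hne]
  have h := hsq (Pi.single j 1 + Pi.single k 1)
  rw [himage, hsource] at h
  rcases hs j with hj | hj <;> rcases hs k with hk | hk <;> norm_num [hj, hk] at h

theorem isSignedPerm_of_sum_sq_mulVec_eq_of_sum_abs_rpow_mulVec_eq {α : ℝ} (hα0 : 0 < α)
    (hα2 : α < 2) (hsq : ∀ x, ∑ i, (M *ᵥ x) i ^ 2 = ∑ i, x i ^ 2)
    (hrpow : ∀ x, ∑ i, |(M *ᵥ x) i| ^ α = ∑ i, |x i| ^ α) : IsSignedPerm M := by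
  have hcol : ∀ j, ∃ i s, (s = 1 ∨ s = -1) ∧ M.col j = Pi.single i s := fun j => by
    rw [← Matrix.mulVec_single_one]
    refine exists_eq_pi_single_of_sum_sq_eq_one_of_sum_abs_rpow_eq_one hα2 ?_ ?_
    · simpa [Pi.single_apply] using hsq (Pi.single j 1)
    · simpa [Pi.single_apply, apply_ite, zero_rpow hα0.ne'] using hrpow (Pi.single j 1)
  choose σ s hs hM using hcol
  exact .of_col_eq_single (injective_of_col_eq_single hs hM hsq) hs hM

end SignedPerm

theorem affine_isometry_is_signed_perm_general (D : ℕ) (h : (Fin D → ℝ) → (Fin D → ℝ))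
    (M : Matrix (Fin D) (Fin D) ℝ) (b : Fin D → ℝ)
    (haff : ∀ x, h x = M.mulVec x + b)
    (α : ℝ) (hα0 : 0 < α) (hα2 : α < 2)
    (hdist : ∀ x y, ∑ i, |h x i - h y i| ^ α = ∑ i, |x i - y i| ^ α)
    (hnorm : ∀ x, Real.sqrt (∑ i, (h x i) ^ 2) = Real.sqrt (∑ i, (x i) ^ 2)) :
    b = 0 ∧ IsSignedPerm M := by
  have hsq : ∀ x, ∑ i, h x i ^ 2 = ∑ i, x i ^ 2 := fun x =>
    (sqrt_inj (by positivity) (by positivity)).1 (hnorm x)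
  have hb : b = 0 := by
    simpa [haff, Fintype.sum_eq_zero_iff_of_nonneg, sq_nonneg, Pi.le_def, funext_iff] using hsq 0
  subst hb
  simp only [haff, add_zero] at hsq hdist
  exact ⟨rfl, isSignedPerm_of_sum_sq_mulVec_eq_of_sum_abs_rpow_mulVec_eq hα0 hα2 hsq
    fun x => by simpa using hdist x 0⟩

/-- An affine bijection of `ℝ^D` preserving the `α`-th powers of ℓα distances (`0 < α < 2`)
and Euclidean norms is linear and given by a signed permutation matrix. -/
theorem affine_isometry_is_signed_perm (D : ℕ) (h : (Fin D → ℝ) → (Fin D → ℝ))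
    (M : Matrix (Fin D) (Fin D) ℝ) (b : Fin D → ℝ)
    (haff : ∀ x, h x = M.mulVec x + b)
    (hbij : Function.Bijective h)
    (α : ℝ) (hα0 : 0 < α) (hα2 : α < 2)
    (hdist : ∀ x y, ∑ i, |h x i - h y i| ^ α = ∑ i, |x i - y i| ^ α)
    (hnorm : ∀ x, Real.sqrt (∑ i, (h x i) ^ 2) = Real.sqrt (∑ i, (x i) ^ 2)) :
    b = 0 ∧ IsSignedPerm M :=
  affine_isometry_is_signed_perm_general D h M b haff α hα0 hα2 hdist hnorm
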